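/- arXiv:2506.04948 — 3 statements merged into one kernel-verified Lean document; each statement's English description precedes it below -/
import Mathlib

section
/- Let K ⊂ ℝ^q be a compact convex set and let D : ℝ^q ⇒ ℝ^q be a set-valued map with closed graph that is locally bounded. For every ε > 0 there exists δ > 0 such that every point w ∈ K satisfying 0 ∈ D^δ(w) + N_K(w) lies within distance ε of the set {w ∈ K : 0 ∈ D(w) + N_K(w)}, where D^δ denotes the δ-enlargement of D and N_K(w) is the normal cone to K at w. -/
open Set Filter Topology Pointwise

/-- The graph of a set-valued map `D : E ⇒ E`. -/
def svGraph {E : Type*} (D : E → Set E) : Set (E × E) := {p | p.2 ∈ D p.1}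

/-- Local boundedness of a set-valued map. -/
def LocallyBoundedSV {E : Type*} [NormedAddCommGroup E] (D : E → Set E) : Prop :=
  ∀ w : E, ∃ U ∈ nhds w, Bornology.IsBounded (⋃ x ∈ U, D x)

/-- The δ-enlargement of a set-valued map. -/
def enlarge {E : Type*} [NormedAddCommGroup E] (D : E → Set E) (δ : ℝ) (w : E) : Set E :=
  {v | ∃ v' w', v' ∈ D w' ∧ ‖v - v'‖ ≤ δ ∧ ‖w - w'‖ ≤ δ}

/-- The normal cone to a convex set `K` at `w`. -/
def normalCone {E : Type*} [NormedAddCommGroup E] [InnerProductSpace ℝ E]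
    (K : Set E) (w : E) : Set E :=
  {u | ∀ x ∈ K, inner ℝ u (x - w) ≤ (0 : ℝ)}

/-!
Encode `0 ∈ D w + N_K(w)` by a multiplier: a pair `(w, v) ∈ svGraph D` with `w ∈ K` and
`-v ∈ N_K(w)`. The latter condition is closed in `(w, v)`, and local boundedness of `D` over the
compact set `cthickening 1 K` keeps the multipliers of δ-approximate solutions (δ ≤ 1) in a fixed
ball, so the relevant pairs form a compact set `A`. A δ-approximate solution is a point of `A`
within δ of the closed graph of `D` for the max-metric on `E × E`, and points of a compact set
close enough to a closed set are close to the intersection of the two.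
-/

open Metric Bornology

section normalCone

variable {E : Type*} [NormedAddCommGroup E] [InnerProductSpace ℝ E]

theorem isClosed_setOf_neg_mem_normalCone (K : Set E) :
    IsClosed {p : E × E | -p.2 ∈ normalCone K p.1} := by
  have : {p : E × E | -p.2 ∈ normalCone K p.1} =
      ⋂ x ∈ K, {p : E × E | inner ℝ (-p.2) (x - p.1) ≤ (0 : ℝ)} := by
    ext p
    simp [normalCone]
  rw [this]
  exact isClosed_biInter fun x _ => isClosed_le (by fun_prop) continuous_const

theorem zero_mem_add_normalCone_iff {A K : Set E} {w : E} :
    (0 : E) ∈ A + normalCone K w ↔ ∃ v ∈ A, -v ∈ normalCone K w := by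
  constructor
  · rintro ⟨v, hv, u, hu, hvu⟩
    exact ⟨v, hv, eq_neg_of_add_eq_zero_right hvu ▸ hu⟩
  · rintro ⟨v, hv, hnv⟩
    exact ⟨v, hv, -v, hnv, add_neg_cancel v⟩

end normalCone

theorem LocallyBoundedSV.isBounded_biUnion {E : Type*} [NormedAddCommGroup E] {D : E → Set E}
    (hD : LocallyBoundedSV D) {s : Set E} (hs : IsCompact s) : IsBounded (⋃ x ∈ s, D x) := by
  refine hs.induction_on (p := fun t => IsBounded (⋃ x ∈ t, D x)) (by simp)
    (fun s t hst ht => ht.subset (biUnion_subset_biUnion_left hst))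
    (fun s t hs ht => by simpa only [biUnion_union] using hs.union ht) fun x _ => ?_
  obtain ⟨U, hU, hUb⟩ := hD x
  exact ⟨U, mem_nhdsWithin_of_mem_nhds hU, hUb⟩

theorem IsCompact.exists_inter_cthickening_subset {X : Type*} [PseudoMetricSpace X]
    {A B U : Set X} (hA : IsCompact A) (hB : IsClosed B) (hU : IsOpen U) (hABU : A ∩ B ⊆ U) :
    ∃ δ > 0, A ∩ cthickening δ B ⊆ U := by
  have hdisj : Disjoint (A \ U) B :=
    disjoint_left.2 fun x hx hxB => hx.2 (hABU ⟨hx.1, hxB⟩)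
  obtain ⟨δ, hδ, hsep⟩ := hdisj.exists_cthickenings (hA.diff hU) hB
  refine ⟨δ, hδ, fun x ⟨hxA, hxB⟩ => by_contra fun hxU => ?_⟩
  exact disjoint_left.1 hsep (self_subset_cthickening _ ⟨hxA, hxU⟩) hxB

theorem stmt0_general {q : ℕ} (K : Set (EuclideanSpace ℝ (Fin q)))
    (hKcomp : IsCompact K)
    (D : EuclideanSpace ℝ (Fin q) → Set (EuclideanSpace ℝ (Fin q)))
    (hclosed : IsClosed (svGraph D)) (hbdd : LocallyBoundedSV D)
    (ε : ℝ) (hε : 0 < ε) :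
    ∃ δ > (0 : ℝ), ∀ w ∈ K, (0 : EuclideanSpace ℝ (Fin q)) ∈ enlarge D δ w + normalCone K w →
      ∃ w', (w' ∈ K ∧ (0 : EuclideanSpace ℝ (Fin q)) ∈ D w' + normalCone K w') ∧
        ‖w - w'‖ ≤ ε := by
  obtain ⟨R, hR⟩ := (hbdd.isBounded_biUnion (hKcomp.cthickening (r := 1))).subset_closedBall 0
  set A := (K ×ˢ closedBall 0 (R + 1)) ∩ {p | -p.2 ∈ normalCone K p.1}
  have hA : IsCompact A :=
    (hKcomp.prod (isCompact_closedBall _ _)).inter_right (isClosed_setOf_neg_mem_normalCone K)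
  obtain ⟨δ, hδ, hsub⟩ := hA.exists_inter_cthickening_subset hclosed isOpen_thickening
    (self_subset_thickening hε _)
  refine ⟨min δ 1, by positivity, fun w hw h0 => ?_⟩
  obtain ⟨v, ⟨v', w', hv', hvv', hww'⟩, hv⟩ := zero_mem_add_normalCone_iff.1 h0
  rw [le_min_iff] at hvv' hww'
  have hw' : w' ∈ cthickening 1 K :=
    mem_cthickening_of_dist_le w' w 1 K hw (by rw [dist_comm, dist_eq_norm]; exact hww'.2)
  have hv'R : ‖v'‖ ≤ R := by simpa using hR (mem_biUnion hw' hv')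
  have hvR : v ∈ closedBall 0 (R + 1) := by
    rw [mem_closedBall_zero_iff]
    linarith [norm_le_norm_add_norm_sub' v v']
  have hdist : dist (w, v) (w', v') ≤ δ := by
    rw [Prod.dist_eq, dist_eq_norm, dist_eq_norm]
    exact max_le hww'.1 hvv'.1
  have hwv : (w, v) ∈ A ∩ cthickening δ (svGraph D) :=
    ⟨⟨⟨hw, hvR⟩, hv⟩, mem_cthickening_of_dist_le _ _ _ _ hv' hdist⟩
  obtain ⟨⟨w'', u⟩, ⟨⟨⟨hw'', -⟩, hu⟩, huD⟩, hnear⟩ :=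
    mem_thickening_iff.1 (hsub hwv)
  refine ⟨w'', ⟨hw'', zero_mem_add_normalCone_iff.2 ⟨u, huD, hu⟩⟩, ?_⟩
  rw [← dist_eq_norm]
  exact ((le_max_left _ _).trans_eq Prod.dist_eq.symm).trans hnear.le

theorem stmt0 {q : ℕ} (K : Set (EuclideanSpace ℝ (Fin q)))
    (hKcomp : IsCompact K) (hKconv : Convex ℝ K)
    (D : EuclideanSpace ℝ (Fin q) → Set (EuclideanSpace ℝ (Fin q)))
    (hclosed : IsClosed (svGraph D)) (hbdd : LocallyBoundedSV D)
    (ε : ℝ) (hε : 0 < ε) :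
    ∃ δ > (0 : ℝ), ∀ w ∈ K, (0 : EuclideanSpace ℝ (Fin q)) ∈ enlarge D δ w + normalCone K w →
      ∃ w', (w' ∈ K ∧ (0 : EuclideanSpace ℝ (Fin q)) ∈ D w' + normalCone K w') ∧
        ‖w - w'‖ ≤ ε :=
  stmt0_general K hKcomp D hclosed hbdd ε hε
end

section
/- Let Ξ be a metric space, π a Borel probability measure on Ξ, h : Ξ → ℝ measurable with finite essential supremum relative to π, Ψ : Ξ → [0,∞) π-integrable, and G ⊂ Ξ measurable. Suppose h*, η > 0 are such that G ⊂ {h ≤ h* − 2η} and π({h ≥ h* − η}) > 0. Then for every β > 0, the Gibbs measure π_β with density proportional to e^{h/β} with respect to π satisfies ∫_G Ψ dπ_β ≤ e^{−η/β} · (∫_Ξ Ψ dπ) / π({h ≥ h* − η}). -/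
open Set Filter Topology MeasureTheory

/-!
Since `h ≤ h* - 2η` on `G`, the unnormalised mass `∫_G Ψ e^{h/β} dπ` is at most
`e^{(h* - 2η)/β} ∫ Ψ dπ`, while the partition function `∫ e^{h/β} dπ` is at least
`e^{(h* - η)/β} π {h ≥ h* - η}`; the quotient of the two bounds is the claim.
-/

section

variable {Ξ : Type*} [MeasurableSpace Ξ] {μ : Measure Ξ} {h : Ξ → ℝ} {β : ℝ}

lemma integrable_exp_div_of_ae_le [IsFiniteMeasure μ] (hmeas : Measurable h) {C : ℝ}
    (hC : ∀ᵐ ζ ∂μ, h ζ ≤ C) (hβ : 0 ≤ β) :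
    Integrable (fun ζ => Real.exp (h ζ / β)) μ := by
  refine Integrable.mono' (integrable_const (Real.exp (C / β)))
    (hmeas.div_const β).exp.aestronglyMeasurable ?_
  filter_upwards [hC] with ζ hζ
  rw [Real.norm_of_nonneg (Real.exp_nonneg _)]
  exact Real.exp_le_exp.2 (div_le_div_of_nonneg_right hζ hβ)

lemma mul_measureReal_le_integral_exp_div [IsFiniteMeasure μ] (hmeas : Measurable h) {C : ℝ}
    (hC : ∀ᵐ ζ ∂μ, h ζ ≤ C) (hβ : 0 ≤ β) (t : ℝ) :
    Real.exp (t / β) * μ.real {ζ | t ≤ h ζ} ≤ ∫ ζ, Real.exp (h ζ / β) ∂μ := by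
  have hint := integrable_exp_div_of_ae_le hmeas hC hβ
  calc Real.exp (t / β) * μ.real {ζ | t ≤ h ζ}
      ≤ ∫ ζ in {ζ | t ≤ h ζ}, Real.exp (h ζ / β) ∂μ :=
        setIntegral_ge_of_const_le_real (measurableSet_le measurable_const hmeas)
          (measure_ne_top μ _)
          (fun ζ hζ => Real.exp_le_exp.2 (div_le_div_of_nonneg_right hζ hβ)) hint.integrableOn
    _ ≤ ∫ ζ, Real.exp (h ζ / β) ∂μ :=
        setIntegral_le_integral hint (ae_of_all _ fun _ => Real.exp_nonneg _)

lemma setIntegral_mul_exp_div_le {Ψ : Ξ → ℝ} (hΨ0 : ∀ ζ, 0 ≤ Ψ ζ) (hΨint : Integrable Ψ μ)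
    (hmeas : Measurable h) {G : Set Ξ} {s : ℝ} (hGsub : G ⊆ {ζ | h ζ ≤ s}) (hβ : 0 ≤ β) :
    ∫ ζ in G, Ψ ζ * Real.exp (h ζ / β) ∂μ ≤ Real.exp (s / β) * ∫ ζ, Ψ ζ ∂μ := by
  have hle : ∀ᵐ ζ ∂μ.restrict G, h ζ ≤ s :=
    ae_restrict_of_ae_restrict_of_subset hGsub
      (ae_restrict_of_forall_mem (measurableSet_le hmeas measurable_const) fun _ hζ => hζ)
  calc ∫ ζ in G, Ψ ζ * Real.exp (h ζ / β) ∂μ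
      ≤ ∫ ζ in G, Ψ ζ * Real.exp (s / β) ∂μ := by
        refine integral_mono_of_nonneg
          (ae_of_all _ fun ζ => mul_nonneg (hΨ0 ζ) (Real.exp_nonneg _))
          (hΨint.mul_const _).integrableOn ?_
        filter_upwards [hle] with ζ hζ
        exact mul_le_mul_of_nonneg_left
          (Real.exp_le_exp.2 (div_le_div_of_nonneg_right hζ hβ)) (hΨ0 ζ)
    _ = (∫ ζ in G, Ψ ζ ∂μ) * Real.exp (s / β) := integral_mul_const _ _
    _ ≤ (∫ ζ, Ψ ζ ∂μ) * Real.exp (s / β) :=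
        mul_le_mul_of_nonneg_right (setIntegral_le_integral hΨint (ae_of_all _ hΨ0))
          (Real.exp_nonneg _)
    _ = Real.exp (s / β) * ∫ ζ, Ψ ζ ∂μ := mul_comm _ _

lemma setIntegral_mul_exp_div_div_integral_exp_le [IsFiniteMeasure μ] (hmeas : Measurable h)
    {C : ℝ} (hC : ∀ᵐ ζ ∂μ, h ζ ≤ C) {Ψ : Ξ → ℝ} (hΨ0 : ∀ ζ, 0 ≤ Ψ ζ)
    (hΨint : Integrable Ψ μ) {G : Set Ξ} {s t : ℝ} (hGsub : G ⊆ {ζ | h ζ ≤ s})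
    (hpos : 0 < μ {ζ | t ≤ h ζ}) (hβ : 0 ≤ β) :
    (∫ ζ in G, Ψ ζ * Real.exp (h ζ / β) ∂μ) / (∫ ζ, Real.exp (h ζ / β) ∂μ) ≤
      Real.exp ((s - t) / β) * (∫ ζ, Ψ ζ ∂μ) / μ.real {ζ | t ≤ h ζ} := by
  have hreal : 0 < μ.real {ζ | t ≤ h ζ} :=
    ENNReal.toReal_pos hpos.ne' (measure_ne_top μ _)
  calc (∫ ζ in G, Ψ ζ * Real.exp (h ζ / β) ∂μ) / (∫ ζ, Real.exp (h ζ / β) ∂μ)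
      ≤ (Real.exp (s / β) * ∫ ζ, Ψ ζ ∂μ) / (Real.exp (t / β) * μ.real {ζ | t ≤ h ζ}) :=
        div_le_div₀ (mul_nonneg (Real.exp_nonneg _) (integral_nonneg hΨ0))
          (setIntegral_mul_exp_div_le hΨ0 hΨint hmeas hGsub hβ) (by positivity)
          (mul_measureReal_le_integral_exp_div hmeas hC hβ t)
    _ = Real.exp ((s - t) / β) * (∫ ζ, Ψ ζ ∂μ) / μ.real {ζ | t ≤ h ζ} := by
        rw [sub_div, Real.exp_sub]
        field_simp

end

theorem stmt4_general {Ξ : Type*} [MeasurableSpace Ξ]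
    (π : Measure Ξ) [IsProbabilityMeasure π]
    (h : Ξ → ℝ) (hmeas : Measurable h)
    (hess : ∃ C : ℝ, ∀ᵐ ζ ∂π, h ζ ≤ C)
    (Ψ : Ξ → ℝ) (hΨ0 : ∀ ζ, 0 ≤ Ψ ζ) (hΨint : Integrable Ψ π)
    (G : Set Ξ)
    (hstar η : ℝ)
    (hGsub : G ⊆ {ζ | h ζ ≤ hstar - 2 * η})
    (hpos : 0 < π {ζ | hstar - η ≤ h ζ})
    (β : ℝ) (hβ : 0 < β) :
    (∫ ζ in G, Ψ ζ * Real.exp (h ζ / β) ∂π) / (∫ ζ, Real.exp (h ζ / β) ∂π) ≤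
      Real.exp (-η / β) * (∫ ζ, Ψ ζ ∂π) / (π {ζ | hstar - η ≤ h ζ}).toReal := by
  obtain ⟨C, hC⟩ := hess
  have hgap : hstar - 2 * η - (hstar - η) = -η := by ring
  simpa only [hgap, measureReal_def] using
    setIntegral_mul_exp_div_div_integral_exp_le hmeas hC hΨ0 hΨint hGsub hpos hβ.le

theorem stmt4 {Ξ : Type*} [MetricSpace Ξ] [MeasurableSpace Ξ] [BorelSpace Ξ]
    (π : Measure Ξ) [IsProbabilityMeasure π]
    (h : Ξ → ℝ) (hmeas : Measurable h)
    (hess : ∃ C : ℝ, ∀ᵐ ζ ∂π, h ζ ≤ C)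
    (Ψ : Ξ → ℝ) (hΨ0 : ∀ ζ, 0 ≤ Ψ ζ) (hΨint : Integrable Ψ π)
    (G : Set Ξ) (hG : MeasurableSet G)
    (hstar η : ℝ) (hη : 0 < η)
    (hGsub : G ⊆ {ζ | h ζ ≤ hstar - 2 * η})
    (hpos : 0 < π {ζ | hstar - η ≤ h ζ})
    (β : ℝ) (hβ : 0 < β) :
    (∫ ζ in G, Ψ ζ * Real.exp (h ζ / β) ∂π) / (∫ ζ, Real.exp (h ζ / β) ∂π) ≤
      Real.exp (-η / β) * (∫ ζ, Ψ ζ ∂π) / (π {ζ | hstar - η ≤ h ζ}).toReal :=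
  stmt4_general π h hmeas hess Ψ hΨ0 hΨint G hstar η hGsub hpos β hβ
end

section
/- Let D₁,…,D_n : ℝ^q ⇒ ℝ^q be graph-closed, locally bounded set-valued maps with nonempty compact convex values, and let D(w) = (1/n) Σᵢ Dᵢ(w). For every compact set K ⊂ ℝ^q and every ε > 0, there exists δ > 0 such that for all w ∈ K, (1/n) Σᵢ Dᵢ^δ(w) ⊂ D^ε(w), where the superscripts denote graph-enlargements. -/
open Set Filter Topology

/-- The Minkowski average of finitely many set-valued maps. -/
def minkAvg {E : Type*} [NormedAddCommGroup E] [Module ℝ E] {n : ℕ}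
    (D : Fin n → E → Set E) (w : E) : Set E :=
  {x | ∃ v : Fin n → E, (∀ i, v i ∈ D i w) ∧ x = (n : ℝ)⁻¹ • ∑ i, v i}

theorem stmt11 {q n : ℕ} (hn : 0 < n)
    (D : Fin n → EuclideanSpace ℝ (Fin q) → Set (EuclideanSpace ℝ (Fin q)))
    (hclosed : ∀ i, IsClosed (svGraph (D i)))
    (hbdd : ∀ i, LocallyBoundedSV (D i))
    (hne : ∀ i w, (D i w).Nonempty)
    (hcomp : ∀ i w, IsCompact (D i w))
    (hconv : ∀ i w, Convex ℝ (D i w))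
    (K : Set (EuclideanSpace ℝ (Fin q))) (hK : IsCompact K)
    (ε : ℝ) (hε : 0 < ε) :
    ∃ δ > (0 : ℝ), ∀ w ∈ K,
      minkAvg (fun i => enlarge (D i) δ) w ⊆ enlarge (minkAvg D) ε w := by
  let E := EuclideanSpace ℝ (Fin q)
  by_contra hcon
  push_neg at hcon
  -- extract a sequence of counterexamples for δ = 1/(k+1)
  have hδpos : ∀ k : ℕ, (0:ℝ) < ((k:ℝ)+1)⁻¹ := fun k => by positivity
  have h' : ∀ k : ℕ, ∃ w ∈ K, ∃ x ∈ minkAvg (fun i => enlarge (D i) ((k:ℝ)+1)⁻¹) w,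
      x ∉ enlarge (minkAvg D) ε w := by
    intro k
    obtain ⟨w, hwK, hsub⟩ := hcon _ (hδpos k)
    rw [Set.not_subset] at hsub
    obtain ⟨x, hx1, hx2⟩ := hsub
    exact ⟨w, hwK, x, hx1, hx2⟩
  choose w hwK x hx hnx using h'
  simp only [minkAvg, Set.mem_setOf_eq] at hx
  choose v hv hxeq using hx
  simp only [enlarge, Set.mem_setOf_eq] at hv
  choose v' w' hmem hvv hww using hv
  -- the thickened compact set
  set K₁ : Set E := Metric.cthickening 1 K with hK₁def
  have hK₁ : IsCompact K₁ := hK.cthickening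
  -- local boundedness gives a uniform bound on K₁
  have hbound : ∀ i : Fin n, ∃ R : ℝ, ∀ y ∈ K₁, D i y ⊆ Metric.closedBall 0 R := by
    intro i
    choose U hU hb using hbdd i
    obtain ⟨t, _, ht⟩ := hK₁.elim_nhds_subcover U (fun y _ => hU y)
    have hbd : Bornology.IsBounded (⋃ z ∈ t, ⋃ y ∈ U z, D i y) := by
      exact (Bornology.isBounded_biUnion t.finite_toSet).2 fun z _ => hb z
    obtain ⟨R, hR⟩ := hbd.subset_closedBall 0
    refine ⟨R, fun y hy u hu => hR ?_⟩
    obtain ⟨z, hz, hyz⟩ := Set.mem_iUnion₂.1 (ht hy)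
    exact Set.mem_iUnion₂.2 ⟨z, hz, Set.mem_iUnion₂.2 ⟨y, hyz, hu⟩⟩
  choose R hR using hbound
  -- membership facts
  have hw'K₁ : ∀ k i, w' k i ∈ K₁ := by
    intro k i
    apply Metric.mem_cthickening_of_dist_le _ (w k) 1 K (hwK k)
    rw [dist_comm, dist_eq_norm]
    calc ‖w k - w' k i‖ ≤ ((k:ℝ)+1)⁻¹ := hww k i
    _ ≤ 1 := by rw [inv_le_one_iff₀]; right; linarith [Nat.cast_nonneg (α := ℝ) k]
  have hv'ball : ∀ k i, v' k i ∈ Metric.closedBall 0 (R i) :=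
    fun k i => hR i (w' k i) (hw'K₁ k i) (hmem k i)
  -- bundle and extract a convergent subsequence
  set C : Set (E × (Fin n → E) × (Fin n → E)) :=
    K ×ˢ ((Set.univ.pi fun _ => K₁) ×ˢ (Set.univ.pi fun i => Metric.closedBall 0 (R i)))
  have hC : IsCompact C :=
    hK.prod ((isCompact_univ_pi fun _ => hK₁).prod
      (isCompact_univ_pi fun i => isCompact_closedBall 0 (R i)))
  set g : ℕ → E × (Fin n → E) × (Fin n → E) := fun k => (w k, fun i => w' k i, fun i => v' k i)
  have hgC : ∀ k, g k ∈ C := by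
    intro k
    refine ⟨hwK k, fun i _ => hw'K₁ k i, fun i _ => hv'ball k i⟩
  obtain ⟨⟨wl, Wl, Vl⟩, haC, φ, hφ, hgt⟩ := hC.tendsto_subseq hgC
  have hφtop : Tendsto φ atTop atTop := hφ.tendsto_atTop
  -- coordinate convergences
  have h1 : Tendsto (fun k => w (φ k)) atTop (𝓝 wl) :=
    (continuous_fst.tendsto _).comp hgt
  have h2 : ∀ i, Tendsto (fun k => w' (φ k) i) atTop (𝓝 (Wl i)) := by
    intro i
    exact ((continuous_apply i).tendsto _).comp (((continuous_fst.comp continuous_snd).tendsto _).comp hgt)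
  have h3 : ∀ i, Tendsto (fun k => v' (φ k) i) atTop (𝓝 (Vl i)) := by
    intro i
    exact ((continuous_apply i).tendsto _).comp (((continuous_snd.comp continuous_snd).tendsto _).comp hgt)
  -- the error bound tends to zero along the subsequence
  have hinv0 : Tendsto (fun k : ℕ => ((φ k : ℝ)+1)⁻¹) atTop (𝓝 0) := by
    apply tendsto_inv_atTop_zero.comp
    apply tendsto_atTop_add_const_right
    exact tendsto_natCast_atTop_atTop.comp hφtop
  -- Wl i = wl
  have hWl : ∀ i, Wl i = wl := by
    intro i
    have hlim : Tendsto (fun k => ‖w (φ k) - w' (φ k) i‖) atTop (𝓝 ‖wl - Wl i‖) :=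
      ((h1.sub (h2 i)).norm)
    have hle : ‖wl - Wl i‖ ≤ 0 := by
      refine le_of_tendsto_of_tendsto hlim hinv0 ?_
      filter_upwards with k
      exact hww (φ k) i
    have : wl - Wl i = 0 := by
      have := norm_le_zero_iff.1 hle
      exact this
    symm
    exact sub_eq_zero.1 this
  -- closed graph: Vl i ∈ D i wl
  have hVl : ∀ i, Vl i ∈ D i wl := by
    intro i
    have hpt : Tendsto (fun k => (w' (φ k) i, v' (φ k) i)) atTop (𝓝 (Wl i, Vl i)) :=
      (h2 i).prodMk_nhds (h3 i)
    have hmemg : ∀ k, (w' (φ k) i, v' (φ k) i) ∈ svGraph (D i) := fun k => hmem (φ k) i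
    have := (hclosed i).mem_of_tendsto hpt (Filter.Eventually.of_forall hmemg)
    rwa [hWl i] at this
  -- v (φ k) i → Vl i
  have h4 : ∀ i, Tendsto (fun k => v (φ k) i) atTop (𝓝 (Vl i)) := by
    intro i
    have hdiff : Tendsto (fun k => v (φ k) i - v' (φ k) i) atTop (𝓝 0) := by
      apply squeeze_zero_norm (fun k => hvv (φ k) i) hinv0
    have := hdiff.add (h3 i)
    simpa using this
  -- x (φ k) → xbar
  set xbar : E := (n : ℝ)⁻¹ • ∑ i, Vl i
  have hxbar : xbar ∈ minkAvg D wl := ⟨Vl, hVl, rfl⟩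
  have hxt : Tendsto (fun k => x (φ k)) atTop (𝓝 xbar) := by
    have hsum : Tendsto (fun k => ∑ i, v (φ k) i) atTop (𝓝 (∑ i, Vl i)) :=
      tendsto_finset_sum _ (fun i _ => h4 i)
    have := hsum.const_smul ((n:ℝ)⁻¹)
    apply this.congr
    intro k
    exact (hxeq (φ k)).symm
  -- derive contradiction
  have hev1 : ∀ᶠ k in atTop, ‖x (φ k) - xbar‖ ≤ ε := by
    have := hxt.eventually_mem (Metric.closedBall_mem_nhds xbar hε)
    filter_upwards [this] with k hk
    rw [← dist_eq_norm]; exact hk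
  have hev2 : ∀ᶠ k in atTop, ‖w (φ k) - wl‖ ≤ ε := by
    have := h1.eventually_mem (Metric.closedBall_mem_nhds wl hε)
    filter_upwards [this] with k hk
    rw [← dist_eq_norm]; exact hk
  obtain ⟨k, hk1, hk2⟩ := (hev1.and hev2).exists
  exact hnx (φ k) ⟨xbar, wl, hxbar, hk1, hk2⟩
end
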